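/- Let n ≥ 1 be a natural number. Let s : ℤ × ℤ → ℕ satisfy: s(p,q) = 0 unless p ≥ 0, q ≥ 0 and p + q ≤ n − 1; and the symmetry s(p,q) = s(q,p) for all p, q. Let h : ℤ × ℤ → ℕ satisfy: (i) h(p,q) = s(p,q) + s(p,q−1) whenever p, q ≥ 0 and p + q ≤ n − 1; (ii) h(p, n−p) = s(p−1, n−p) + s(p, n−p−1) for every 0 ≤ p ≤ n; and (iii) the duality h(p,q) = h(n−p, n−q) for all 0 ≤ p, q ≤ n. Then for every 0 ≤ p ≤ n, the alternating sum ∑_{q=0}^{n} (−1)^q h(p,q) = 0. (This is the combinatorial content of the paper's Theorem A.4: on a closed Vaisman manifold of complex dimension n, the Hodge numbers h^{p,q} satisfy these relations with s^{p,q} the dimensions of spaces of transversally harmonic, transversally effective foliate (p,q)-forms, and consequently all χ_p(X) vanish, i.e., the Hirzebruch χ_y-genus is identically zero.) -/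
import Mathlib

lemma telescope_aux (T : ℤ → ℤ) : ∀ m : ℕ,
    ∑ q ∈ Finset.range (m + 1), (-1 : ℤ) ^ q * (T q + T (q - 1))
      = (-1 : ℤ) ^ m * T m + T (-1) := by
  intro m
  induction m with
  | zero => simp
  | succ k ih =>
    rw [Finset.sum_range_succ, ih]
    push_cast [pow_succ]
    ring

/-- The combinatorial content of Theorem A.4 (Vaisman manifolds): suppose `n ≥ 1`,
`s : ℤ × ℤ → ℕ` vanishes unless `p ≥ 0`, `q ≥ 0` and `p + q ≤ n - 1`, and is
symmetric `s (p, q) = s (q, p)`; suppose `h : ℤ × ℤ → ℕ` satisfies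
(i) `h (p, q) = s (p, q) + s (p, q-1)` whenever `p, q ≥ 0` and `p + q ≤ n - 1`,
(ii) `h (p, n-p) = s (p-1, n-p) + s (p, n-p-1)` for `0 ≤ p ≤ n`, and
(iii) the duality `h (p, q) = h (n-p, n-q)` for `0 ≤ p, q ≤ n`.
Then `∑_{q=0}^n (-1)^q h (p, q) = 0` for every `0 ≤ p ≤ n`. -/
theorem stmt_4 (n : ℕ) (hn : 1 ≤ n) (s : ℤ × ℤ → ℕ)
    (hs0 : ∀ p q : ℤ, ¬(0 ≤ p ∧ 0 ≤ q ∧ p + q ≤ (n : ℤ) - 1) → s (p, q) = 0)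
    (hsym : ∀ p q : ℤ, s (p, q) = s (q, p))
    (h : ℤ × ℤ → ℕ)
    (hh1 : ∀ p q : ℤ, 0 ≤ p → 0 ≤ q → p + q ≤ (n : ℤ) - 1 →
      h (p, q) = s (p, q) + s (p, q - 1))
    (hh2 : ∀ p : ℤ, 0 ≤ p → p ≤ (n : ℤ) →
      h (p, (n : ℤ) - p) = s (p - 1, (n : ℤ) - p) + s (p, (n : ℤ) - p - 1))
    (hh3 : ∀ p q : ℤ, 0 ≤ p → p ≤ (n : ℤ) → 0 ≤ q → q ≤ (n : ℤ) →
      h (p, q) = h ((n : ℤ) - p, (n : ℤ) - q)) :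
    ∀ p : ℤ, 0 ≤ p → p ≤ (n : ℤ) →
      ∑ q ∈ Finset.range (n + 1), (-1 : ℤ) ^ q * (h (p, (q : ℤ)) : ℤ) = 0 := by
  intro p hp0 hpn
  set T : ℤ → ℤ := fun q =>
    if q ≤ (n : ℤ) - p - 1 then (s (p, q) : ℤ) else (s ((n : ℤ) - p, (n : ℤ) - q - 1) : ℤ)
    with hT
  have key : ∀ q : ℤ, 0 ≤ q → q ≤ (n : ℤ) → (h (p, q) : ℤ) = T q + T (q - 1) := by
    intro q hq0 hqn
    rcases lt_trichotomy q ((n : ℤ) - p) with hlt | heq | hgt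
    · -- q ≤ n - p - 1
      have h1 : q ≤ (n : ℤ) - p - 1 := by omega
      have h2 : q - 1 ≤ (n : ℤ) - p - 1 := by omega
      rw [hT]
      simp only [if_pos h1, if_pos h2]
      rw [hh1 p q hp0 hq0 (by omega)]
      push_cast; ring
    · -- q = n - p
      have h1 : ¬ q ≤ (n : ℤ) - p - 1 := by omega
      have h2 : q - 1 ≤ (n : ℤ) - p - 1 := by omega
      rw [hT]
      simp only [if_neg h1, if_pos h2]
      rw [heq, hh2 p hp0 hpn, hsym ((n:ℤ) - p) ((n:ℤ) - ((n:ℤ) - p) - 1)]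
      have : (n : ℤ) - ((n:ℤ) - p) - 1 = p - 1 := by ring
      rw [this]
      push_cast; ring
    · -- q ≥ n - p + 1
      have h1 : ¬ q ≤ (n : ℤ) - p - 1 := by omega
      have h2 : ¬ q - 1 ≤ (n : ℤ) - p - 1 := by omega
      rw [hT]
      simp only [if_neg h1, if_neg h2]
      rw [hh3 p q hp0 hpn hq0 hqn,
        hh1 ((n:ℤ) - p) ((n:ℤ) - q) (by omega) (by omega) (by omega)]
      have : (n : ℤ) - (q - 1) - 1 = (n : ℤ) - q := by ring
      rw [this]
      push_cast; ring
  have hsum : ∑ q ∈ Finset.range (n + 1), (-1 : ℤ) ^ q * (h (p, (q : ℤ)) : ℤ)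
      = ∑ q ∈ Finset.range (n + 1), (-1 : ℤ) ^ q * (T q + T ((q : ℤ) - 1)) := by
    refine Finset.sum_congr rfl fun q hq => ?_
    rw [Finset.mem_range] at hq
    rw [key q (by positivity) (by exact_mod_cast Nat.lt_succ_iff.mp hq)]
  rw [hsum, telescope_aux T n]
  have hTn : T (n : ℤ) = 0 := by
    rw [hT]
    simp only
    rw [if_neg (by omega)]
    rw [hs0 ((n:ℤ) - p) ((n:ℤ) - (n:ℤ) - 1) (by omega)]
    simp
  have hTm : T (-1) = 0 := by
    rw [hT]
    simp only
    rw [if_pos (by omega)]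
    rw [hs0 p (-1) (by omega)]
    simp
  rw [hTn, hTm]
  ring
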